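/- There exist a threshold R₀ ≫ 1 and a universal constant A such that the following holds: for every R ≥ R₀, every circular rectangle 𝓡 in the annulus 𝒜_R = B(0, R+1) − closure(B(0,R)), and every admissible disk D in 𝒜_R, if l denotes the length of the orthogonal (radial) projection of D ∩ 𝓡 onto the circle ∂B(0,R), then l² ≤ A · area(D ∩ 𝓡). -/

import Mathlib

open Set MeasureTheory

noncomputable section

namespace DPG

/-! ### Conformal extremal width -/

/-- The circular rectangle `{r e^{iθ} : r ∈ (R, R+1), θ ∈ (θ₁, θ₂)}` in the annulus
`𝒜_R`. -/
def circRect (R θ₁ θ₂ : ℝ) : Set ℂ :=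
  {z | ∃ r θ : ℝ, R < r ∧ r < R + 1 ∧ θ₁ < θ ∧ θ < θ₂ ∧
    z = r * Complex.exp (θ * Complex.I)}

/-- The circular arc `{ρ e^{iθ} : θ ∈ [θ₁, θ₂]}`. -/
def circArc (ρ θ₁ θ₂ : ℝ) : Set ℂ :=
  {z | ∃ θ : ℝ, θ₁ ≤ θ ∧ θ ≤ θ₂ ∧ z = ρ * Complex.exp (θ * Complex.I)}

/-- The round annulus `𝒜_R = B(0, R+1) − closure (B(0, R))`. -/
def annulusA (R : ℝ) : Set ℂ := Metric.ball 0 (R + 1) \ Metric.closedBall 0 R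

/-- The family of curves in `Ω` joining `A` to `B`: continuous curves on `[0,1]`,
(piecewise) differentiable in the interior, with interior inside `Ω` and endpoints on `A`
and `B`. -/
def joiningCurves (Ω A B : Set ℂ) : Set (ℝ → ℂ) :=
  {α | ContinuousOn α (Icc 0 1) ∧ DifferentiableOn ℝ α (Ioo 0 1) ∧
    α '' Ioo 0 1 ⊆ Ω ∧ ((α 0 ∈ A ∧ α 1 ∈ B) ∨ (α 0 ∈ B ∧ α 1 ∈ A))}

/-- The length `∫_α ρ |dz|` of a curve with respect to a conformal metric `ρ`. -/
def curveLen (ρ : ℂ → ℝ) (α : ℝ → ℂ) : ℝ :=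
  ∫ t in (0 : ℝ)..1, ρ (α t) * ‖deriv α t‖

/-- A Borel conformal metric `ρ` is admissible for a curve family `Γ` if it is
nonnegative and gives every curve of `Γ` length at least `1`. -/
def ConfAdmissible (ρ : ℂ → ℝ) (Γ : Set (ℝ → ℂ)) : Prop :=
  Measurable ρ ∧ (∀ z, 0 ≤ ρ z) ∧ ∀ α ∈ Γ, 1 ≤ curveLen ρ α

/-- The conformal extremal width (modulus) of a curve family `Γ` in a domain `Ω`:
the infimum of `∫_Ω ρ²` over admissible metrics.  It is the reciprocal of the conformal
extremal length `EL(Γ) = sup_ρ inf_α l_ρ(α)²/area_ρ(Ω)`. -/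
def confEW (Ω : Set ℂ) (Γ : Set (ℝ → ℂ)) : ℝ :=
  sInf {A | ∃ ρ, ConfAdmissible ρ Γ ∧ A = ∫ z in Ω, ρ z ^ 2}

/-- The extremal width of a circular rectangle: the extremal width of the family of
curves joining its two horizontal boundary arcs. -/
def rectEW (R θ₁ θ₂ : ℝ) : ℝ :=
  confEW (circRect R θ₁ θ₂)
    (joiningCurves (circRect R θ₁ θ₂) (circArc R θ₁ θ₂) (circArc (R + 1) θ₁ θ₂))

/-- The extremal width of the annulus `𝒜_R`: the extremal width of the family of curves
joining its two boundary circles. -/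
def annulusEW (R : ℝ) : ℝ :=
  confEW (annulusA R)
    (joiningCurves (annulusA R) (Metric.sphere 0 R) (Metric.sphere 0 (R + 1)))

end DPG

namespace DPG

/-- The set of admissible intersection angles arising from Coxeter weights:
`{π/n : n ∈ ℕ, n ≥ 2} ∪ {0}`. -/
def coxeterAngles : Set ℝ := {ω | ω = 0 ∨ ∃ n : ℕ, 2 ≤ n ∧ ω = Real.pi / n}

/-- The disk `closedBall z₀ r` meets the inner complementary disk
`D₁ = closure (B(0,R))` of the annulus `𝒜_R`. -/
def MeetsInner (R : ℝ) (z₀ : ℂ) (r : ℝ) : Prop :=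
  (Metric.closedBall z₀ r ∩ Metric.closedBall (0 : ℂ) R).Nonempty

/-- The disk `closedBall z₀ r` meets the outer complementary disk
`D₂ = (B(0,R+1))ᶜ` of the annulus `𝒜_R`. -/
def MeetsOuter (R : ℝ) (z₀ : ℂ) (r : ℝ) : Prop :=
  (Metric.closedBall z₀ r ∩ (Metric.ball (0 : ℂ) (R + 1))ᶜ).Nonempty

/-- An admissible disk `D = closedBall z₀ r` in the annulus `𝒜_R`: it meets `𝒜_R`; for
each of the two complementary disks `D₁, D₂` of `𝒜_R`, it is either disjoint from it or
meets it at an angle `ωᵢ ∈ {π/n : n ≥ 2} ∪ {0}` (expressed by the standard algebraic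
relation between the center, the radii and the angle); and when it meets both,
`ω₁ + ω₂ < π`. -/
def IsAdmissibleDisk (R : ℝ) (z₀ : ℂ) (r : ℝ) : Prop :=
  0 < r ∧ (Metric.closedBall z₀ r ∩ annulusA R).Nonempty ∧
  ∃ ω₁ ∈ coxeterAngles, ∃ ω₂ ∈ coxeterAngles,
    (MeetsInner R z₀ r → ‖z₀‖ ^ 2 = R ^ 2 + r ^ 2 + 2 * R * r * Real.cos ω₁) ∧
    (MeetsOuter R z₀ r →
      ‖z₀‖ ^ 2 = (R + 1) ^ 2 + r ^ 2 - 2 * (R + 1) * r * Real.cos ω₂) ∧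
    (MeetsInner R z₀ r → MeetsOuter R z₀ r → ω₁ + ω₂ < Real.pi)

end DPG

namespace DPG

/-- The closed radial segment `{r e^{iθ} : r ∈ [R, R+1]}` of the annulus `𝒜_R`. -/
def radialSeg (R θ : ℝ) : Set ℂ :=
  {z | ∃ r : ℝ, R ≤ r ∧ r ≤ R + 1 ∧ z = r * Complex.exp (θ * Complex.I)}

/-- The length of the orthogonal (radial) projection of a subset `E` of the circular
rectangle `{re^{iθ} : r ∈ (R,R+1), θ ∈ (θ₁,θ₂)}` onto the circle `∂B(0,R)`: `R` times the
measure of the set of angles whose radial segment meets `E`. -/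
def projLen (R θ₁ θ₂ : ℝ) (E : Set ℂ) : ℝ :=
  R * (MeasureTheory.volume
    {θ : ℝ | θ₁ < θ ∧ θ < θ₂ ∧ (E ∩ radialSeg R θ).Nonempty}).toReal

end DPG

open DPG

/-!
Let `d = ‖z₀‖` and let `δ = arcsin (r / d)` be the half-angle under which the disk `D` is seen
from the origin. Admissibility forces `r ≤ 3` and `R² + r² ≤ d² ≤ (R + 1)² + r²`, i.e. the
tangent length `√(d² - r²)` lies in `[R, R + 1]`. Every angle of the projection of `D ∩ 𝓡` lies
within `δ` of `arg z₀` modulo `2π`; as `𝓡` spans at most `2π`, at most two such windows meet it,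
so a single window piece `[a, b]` carries half of the projection, and `R (b - a) ≤ 2 d δ ≤ π r`.
Pull the angular range in by `ψ = (b - a) / 4` on both sides. Every radial line within `δ - ψ`
of `arg z₀` cuts `D` in a chord containing `[m - H, m + H]`, the chord at angle exactly `δ - ψ`,
and `H ≥ d sin ψ ≳ R (b - a)`; as `(m - H) (m + H) = d² - r²`, this chord passes through the
tangent circle and so meets `[R, R + 1]` in length `≳ min H 1 ≳ R (b - a)`. Hence `D ∩ 𝓡`
contains a polar rectangle, and inside it a round disk, of size `≳ R (b - a) ≳ l`.
-/

open Real Metric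
open Complex (I arg)

namespace DPG

lemma sin_add_sq_sub_sin_sq_sub_sin_sq (β ψ : ℝ) :
    sin (β + ψ) ^ 2 - sin β ^ 2 - sin ψ ^ 2 = 2 * sin β * sin ψ * cos (β + ψ) := by
  rw [sin_add, cos_add]
  linear_combination sin β ^ 2 * sin_sq_add_cos_sq ψ + sin ψ ^ 2 * sin_sq_add_cos_sq β

lemma sin_sq_add_sin_sq_le_sin_add_sq {β ψ : ℝ} (hβ : 0 ≤ β) (hψ : 0 ≤ ψ) (h : β + ψ ≤ π / 2) :
    sin β ^ 2 + sin ψ ^ 2 ≤ sin (β + ψ) ^ 2 := by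
  have hid := sin_add_sq_sub_sin_sq_sub_sin_sq β ψ
  have : 0 ≤ 2 * sin β * sin ψ * cos (β + ψ) := by
    have := sin_nonneg_of_nonneg_of_le_pi hβ (by linarith)
    have := sin_nonneg_of_nonneg_of_le_pi hψ (by linarith)
    have := cos_nonneg_of_mem_Icc (x := β + ψ) ⟨by linarith, h⟩
    positivity
  linarith

lemma exists_int_abs_sub_le_of_cos_le_cos {δ x : ℝ} (hδ₀ : 0 ≤ δ) (hδ : δ ≤ π)
    (h : cos δ ≤ cos x) :
    ∃ k : ℤ, |x - k * (2 * π)| ≤ δ := by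
  refine ⟨round (x / (2 * π)), ?_⟩
  set y := x - round (x / (2 * π)) * (2 * π)
  have hy : |y| ≤ π := by
    have hx : y = (x / (2 * π) - round (x / (2 * π))) * (2 * π) := by
      simp only [y]; field_simp
    rw [hx, abs_mul, abs_of_pos two_pi_pos]
    nlinarith [abs_sub_round (x / (2 * π)), pi_pos]
  by_contra! hlt
  have := cos_lt_cos_of_nonneg_of_le_pi hδ₀ hy hlt
  rw [cos_abs, cos_sub_int_mul_two_pi] at this
  linarith

lemma cos_le_cos_of_abs_sub_le {β x : ℝ} (k : ℤ) (hβ : β ≤ π) (h : |x - k * (2 * π)| ≤ β) :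
    cos β ≤ cos x := by
  rw [← cos_sub_int_mul_two_pi x k, ← cos_abs (x - _)]
  exact cos_le_cos_of_nonneg_of_le_pi (abs_nonneg _) hβ h

lemma abs_arg_le_pi_div_two_mul {z : ℂ} (hz : 0 ≤ z.re) : |arg z| ≤ π / 2 * (|z.im| / ‖z‖) := by
  have hle : |arg z| ≤ π / 2 := Complex.abs_arg_le_pi_div_two_iff.2 hz
  have hjordan := mul_le_sin (abs_nonneg (arg z)) hle
  rw [← abs_sin_eq_sin_abs_of_abs_le_pi (by linarith [pi_pos]), Complex.sin_arg, abs_div,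
    abs_norm] at hjordan
  have := pi_pos
  calc |arg z| = π / 2 * (2 / π * |arg z|) := by field_simp
    _ ≤ π / 2 * (|z.im| / ‖z‖) := by gcongr

lemma norm_ofReal_mul_exp_sub_sq (ρ θ : ℝ) (z : ℂ) :
    ‖ρ * Complex.exp (θ * I) - z‖ ^ 2 = ρ ^ 2 + ‖z‖ ^ 2 - 2 * ρ * ‖z‖ * cos (θ - arg z) := by
  conv_lhs => rw [← Complex.norm_mul_exp_arg_mul_I z]
  rw [Complex.sq_norm, Complex.normSq_apply]
  simp only [Complex.sub_re, Complex.sub_im, Complex.re_ofReal_mul, Complex.im_ofReal_mul,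
    Complex.exp_ofReal_mul_I_re, Complex.exp_ofReal_mul_I_im, cos_sub]
  linear_combination ρ ^ 2 * sin_sq_add_cos_sq θ + ‖z‖ ^ 2 * sin_sq_add_cos_sq (arg z)

lemma norm_ofReal_mul_exp_arg_sub (t : ℝ) (z : ℂ) :
    ‖t * Complex.exp (arg z * I) - z‖ = |t - ‖z‖| := by
  nth_rw 2 [← Complex.norm_mul_exp_arg_mul_I z]
  rw [← sub_mul, norm_mul, Complex.norm_exp_ofReal_mul_I, mul_one, ← Complex.ofReal_sub,
    Complex.norm_real, Real.norm_eq_abs]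

lemma cos_le_cos_sub_arg_of_mem_closedBall {z₀ : ℂ} {r ρ θ δ : ℝ} (hz₀ : z₀ ≠ 0) (hρ : 0 < ρ)
    (hδ : ‖z₀‖ * sin δ = r) (h : ρ * Complex.exp (θ * I) ∈ closedBall z₀ r) :
    cos δ ≤ cos (θ - arg z₀) := by
  have hd : 0 < ‖z₀‖ := norm_pos_iff.2 hz₀
  rw [mem_closedBall, dist_eq_norm] at h
  have hsq := pow_le_pow_left₀ (norm_nonneg _) h 2
  rw [norm_ofReal_mul_exp_sub_sq, ← hδ] at hsq
  have : 2 * ρ * ‖z₀‖ * cos δ ≤ 2 * ρ * ‖z₀‖ * cos (θ - arg z₀) := by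
    nlinarith [sq_nonneg (ρ - ‖z₀‖ * cos δ), sin_sq_add_cos_sq δ]
  exact le_of_mul_le_mul_left this (by positivity)

lemma ofReal_mul_exp_mem_closedBall {z₀ : ℂ} {r ρ θ β : ℝ} (hr : 0 ≤ r) (hρ : 0 ≤ ρ)
    (hθ : cos β ≤ cos (θ - arg z₀))
    (h : (ρ - ‖z₀‖ * cos β) ^ 2 + (‖z₀‖ * sin β) ^ 2 ≤ r ^ 2) :
    ρ * Complex.exp (θ * I) ∈ closedBall z₀ r := by
  rw [mem_closedBall, dist_eq_norm, ← pow_le_pow_iff_left₀ (norm_nonneg _) hr two_ne_zero,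
    norm_ofReal_mul_exp_sub_sq]
  have : 2 * ρ * ‖z₀‖ * cos β ≤ 2 * ρ * ‖z₀‖ * cos (θ - arg z₀) := by gcongr
  nlinarith [sin_sq_add_cos_sq β]

def polarRect (ρ₁ ρ₂ θ₁ θ₂ : ℝ) : Set ℂ :=
  {z | ∃ ρ θ : ℝ, ρ₁ < ρ ∧ ρ < ρ₂ ∧ θ₁ < θ ∧ θ < θ₂ ∧ z = ρ * Complex.exp (θ * I)}

lemma circRect_eq_polarRect (R θ₁ θ₂ : ℝ) : circRect R θ₁ θ₂ = polarRect R (R + 1) θ₁ θ₂ := rfl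

lemma polarRect_subset_polarRect {ρ₁ ρ₂ θ₁ θ₂ ρ₁' ρ₂' θ₁' θ₂' : ℝ} (hρ₁ : ρ₁ ≤ ρ₁')
    (hρ₂ : ρ₂' ≤ ρ₂) (hθ₁ : θ₁ ≤ θ₁') (hθ₂ : θ₂' ≤ θ₂) :
    polarRect ρ₁' ρ₂' θ₁' θ₂' ⊆ polarRect ρ₁ ρ₂ θ₁ θ₂ := by
  rintro _ ⟨ρ, θ, h₁, h₂, h₃, h₄, rfl⟩
  exact ⟨ρ, θ, by linarith, by linarith, by linarith, by linarith, rfl⟩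

lemma polarRect_subset_closedBall {z₀ : ℂ} {r β c ρ₁ ρ₂ : ℝ} (k : ℤ)
    (hc : c = arg z₀ + k * (2 * π)) (hβ : β ≤ π) (hr : 0 ≤ r) (hρ₁ : 0 ≤ ρ₁)
    (hρ : ∀ ρ ∈ Ioo ρ₁ ρ₂, (ρ - ‖z₀‖ * cos β) ^ 2 + (‖z₀‖ * sin β) ^ 2 ≤ r ^ 2) :
    polarRect ρ₁ ρ₂ (c - β) (c + β) ⊆ closedBall z₀ r := by
  rintro _ ⟨ρ, θ, h₁, h₂, h₃, h₄, rfl⟩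
  refine ofReal_mul_exp_mem_closedBall hr (by linarith) (cos_le_cos_of_abs_sub_le k hβ ?_)
    (hρ ρ ⟨h₁, h₂⟩)
  rw [abs_le]
  constructor <;> linarith

lemma half_min_le_min_sub_max {R m H : ℝ} (hR : 1 ≤ R) (hH : 0 ≤ H) (hm : 0 ≤ m)
    (h₁ : R ^ 2 ≤ m ^ 2 - H ^ 2) (h₂ : m ^ 2 - H ^ 2 ≤ (R + 1) ^ 2) :
    min H 1 / 2 ≤ min (m + H) (R + 1) - max (m - H) R := by
  have hmR : R ≤ m := by nlinarith
  rcases le_total H 1 with h | h <;> rcases le_total (m + H) (R + 1) with h' | h' <;>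
    rcases le_total (m - H) R with h'' | h'' <;>
    simp only [min_eq_left, min_eq_right, max_eq_left, max_eq_right, h, h', h''] <;> nlinarith

lemma exists_polarRect_subset_closedBall {z₀ : ℂ} {R r δ ψ c : ℝ} (k : ℤ)
    (hc : c = arg z₀ + k * (2 * π)) (hR : 1 ≤ R) (hr : 0 ≤ r) (hδ : ‖z₀‖ * sin δ = r)
    (hψ : 0 ≤ ψ) (hψδ : ψ ≤ δ) (hδπ : δ ≤ π / 2)
    (h₁ : R ^ 2 + r ^ 2 ≤ ‖z₀‖ ^ 2) (h₂ : ‖z₀‖ ^ 2 ≤ (R + 1) ^ 2 + r ^ 2) :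
    ∃ ρ₁ ρ₂, R ≤ ρ₁ ∧ ρ₂ ≤ R + 1 ∧ min (‖z₀‖ * sin ψ) 1 / 2 ≤ ρ₂ - ρ₁ ∧
      polarRect ρ₁ ρ₂ (c - (δ - ψ)) (c + (δ - ψ)) ⊆ closedBall z₀ r := by
  set d := ‖z₀‖
  set β := δ - ψ
  -- the radial line at angle `β` from `arg z₀` meets the disk in `[m - H, m + H]`
  set m := d * cos β
  set H := √(r ^ 2 - (d * sin β) ^ 2)
  have hsin : sin β ^ 2 + sin ψ ^ 2 ≤ sin δ ^ 2 := by
    simpa [β] using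
      sin_sq_add_sin_sq_le_sin_add_sq (β := β) (ψ := ψ) (by linarith) hψ (by simpa [β])
  have hψH : (d * sin ψ) ^ 2 ≤ r ^ 2 - (d * sin β) ^ 2 := by
    rw [← hδ]; nlinarith [sq_nonneg d]
  have hH : H ^ 2 = r ^ 2 - (d * sin β) ^ 2 := sq_sqrt (by nlinarith [sq_nonneg (d * sin ψ)])
  have hdψ : d * sin ψ ≤ H := le_sqrt_of_sq_le hψH
  have hmH : m ^ 2 - H ^ 2 = d ^ 2 - r ^ 2 := by
    rw [hH]; linear_combination d ^ 2 * sin_sq_add_cos_sq β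
  have hm : 0 ≤ m :=
    mul_nonneg (norm_nonneg _) (cos_nonneg_of_mem_Icc ⟨by linarith, by linarith⟩)
  refine ⟨max (m - H) R, min (m + H) (R + 1), le_max_right _ _, min_le_right _ _, ?_, ?_⟩
  · exact (by gcongr : min (d * sin ψ) 1 / 2 ≤ min H 1 / 2).trans
      (half_min_le_min_sub_max hR (sqrt_nonneg _) hm (by linarith) (by linarith))
  · refine polarRect_subset_closedBall k hc (by linarith) hr (by positivity) fun ρ hρ ↦ ?_
    have : (ρ - m) ^ 2 ≤ H ^ 2 :=
      sq_le_sq' (by linarith [hρ.1, le_max_left (m - H) R])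
        (by linarith [hρ.2, min_le_left (m + H) (R + 1)])
    show (ρ - m) ^ 2 + (d * sin β) ^ 2 ≤ r ^ 2
    linarith

lemma ball_subset_polarRect {ρ₁ ρ₂ θ₁ θ₂ s : ℝ} (hρ₁ : 0 < ρ₁) (hs₁ : s ≤ (ρ₂ - ρ₁) / 2)
    (hs₂ : π * s ≤ ρ₁ * (θ₂ - θ₁)) :
    ball (((ρ₁ + ρ₂) / 2 : ℝ) * Complex.exp (((θ₁ + θ₂) / 2 : ℝ) * I)) s ⊆
      polarRect ρ₁ ρ₂ θ₁ θ₂ := by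
  intro z hz
  set ρc := (ρ₁ + ρ₂) / 2 with hρc
  set θc := (θ₁ + θ₂) / 2 with hθc
  set u := Complex.exp (θc * I)
  have hu : ‖u‖ = 1 := Complex.norm_exp_ofReal_mul_I θc
  have hu₀ : u ≠ 0 := Complex.exp_ne_zero _
  rw [mem_ball, dist_eq_norm] at hz
  have hs : 0 < s := (norm_nonneg _).trans_lt hz
  -- rotate the center of the ball onto the positive real axis
  set ζ := z / u
  have hζ : ‖ζ - ρc‖ < s := by
    rwa [show ζ - ρc = (z - ρc * u) / u by rw [sub_div, mul_div_cancel_right₀ _ hu₀],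
      norm_div, hu, div_one]
  have hnorm : ‖ζ‖ = ‖z‖ := by rw [norm_div, hu, div_one]
  have hz_eq : z = ‖z‖ * Complex.exp (↑(θc + arg ζ) * I) := by
    rw [← hnorm, Complex.ofReal_add, add_mul, Complex.exp_add, mul_comm (Complex.exp _),
      ← mul_assoc, Complex.norm_mul_exp_arg_mul_I, div_mul_cancel₀ _ hu₀]
  have hρ : |‖z‖ - ρc| < s := by
    have := abs_norm_sub_norm_le ζ ρc
    rw [Complex.norm_real, Real.norm_of_nonneg (by linarith), hnorm] at this
    exact this.trans_lt hζ
  have hre : ρ₁ < ζ.re := by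
    have := (Complex.abs_re_le_norm (ζ - ρc)).trans_lt hζ
    rw [Complex.sub_re, Complex.ofReal_re, abs_lt] at this
    linarith
  have him : |ζ.im| < s := by
    simpa using (Complex.abs_im_le_norm (ζ - ρc)).trans_lt hζ
  rw [abs_lt] at hρ
  have harg : |arg ζ| < (θ₂ - θ₁) / 2 := by
    have hρ₁z : ρ₁ < ‖ζ‖ := by rw [hnorm]; linarith
    have hsρ : s / ρ₁ ≤ (θ₂ - θ₁) / π := by rw [div_le_div_iff₀ hρ₁ pi_pos]; linarith
    calc |arg ζ| ≤ π / 2 * (|ζ.im| / ‖ζ‖) := abs_arg_le_pi_div_two_mul (by linarith)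
      _ < π / 2 * (s / ρ₁) := by gcongr
      _ ≤ π / 2 * ((θ₂ - θ₁) / π) := by gcongr
      _ = (θ₂ - θ₁) / 2 := by field_simp
  rw [abs_lt] at harg
  exact ⟨‖z‖, θc + arg ζ, by linarith, by linarith, by linarith, by linarith, hz_eq⟩

lemma exists_volume_real_le_two_mul_window {S : Set ℝ} {θ₁ θ₂ φ δ : ℝ} (hδ : δ ≤ π)
    (hθ : θ₂ - θ₁ ≤ 2 * π)
    (hS : ∀ θ ∈ S, θ₁ < θ ∧ θ < θ₂ ∧ ∃ k : ℤ, |θ - (φ + k * (2 * π))| ≤ δ) :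
    ∃ k : ℤ, volume.real S ≤
      2 * volume.real (Icc θ₁ θ₂ ∩ Icc (φ + k * (2 * π) - δ) (φ + k * (2 * π) + δ)) := by
  set window : ℤ → Set ℝ := fun k ↦ Icc θ₁ θ₂ ∩ Icc (φ + k * (2 * π) - δ) (φ + k * (2 * π) + δ)
  -- `k₀` indexes the first window reaching `θ₁`; as `θ₂ - θ₁ ≤ 2π`, only the next one can follow
  set k₀ := ⌈(θ₁ - δ - φ) / (2 * π)⌉
  have hsub : S ⊆ window k₀ ∪ window (k₀ + 1) := by
    intro θ hθS
    obtain ⟨h₁, h₂, k, hk⟩ := hS θ hθS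
    rw [abs_le] at hk
    have hk₀ : k₀ ≤ k := Int.ceil_le.2 (by rw [div_le_iff₀ two_pi_pos]; linarith)
    have hk₁ : k < k₀ + 2 := by
      have := Int.le_ceil ((θ₁ - δ - φ) / (2 * π))
      rw [div_le_iff₀ two_pi_pos] at this
      have : ((k - k₀ : ℤ) : ℝ) * (2 * π) < 2 * (2 * π) := by push_cast; linarith
      have : k - k₀ < 2 := by exact_mod_cast lt_of_mul_lt_mul_right this two_pi_pos.le
      omega
    obtain rfl | rfl : k = k₀ ∨ k = k₀ + 1 := by omega
    · exact Or.inl ⟨⟨h₁.le, h₂.le⟩, by linarith, by linarith⟩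
    · exact Or.inr ⟨⟨h₁.le, h₂.le⟩, by linarith, by linarith⟩
  have hfin : volume (window k₀ ∪ window (k₀ + 1)) ≠ ⊤ :=
    ((measure_mono (union_subset inter_subset_left inter_subset_left)).trans_lt
      measure_Icc_lt_top).ne
  have := (measureReal_mono hsub hfin).trans (measureReal_union_le _ _)
  rcases le_total (volume.real (window k₀)) (volume.real (window (k₀ + 1))) with h | h
  · exact ⟨k₀ + 1, by linarith⟩
  · exact ⟨k₀, by linarith⟩

lemma eq_pi_div_two_or_mem_Icc_of_mem_coxeterAngles {ω : ℝ} (hω : ω ∈ coxeterAngles) :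
    ω = π / 2 ∨ ω ∈ Icc 0 (π / 3) := by
  obtain rfl | ⟨n, hn, rfl⟩ := hω
  · exact Or.inr ⟨le_rfl, by positivity⟩
  · obtain rfl | hn3 : n = 2 ∨ 3 ≤ n := by omega
    · left; norm_num
    · exact Or.inr ⟨by positivity,
        div_le_div_of_nonneg_left pi_pos.le (by norm_num) (by exact_mod_cast hn3)⟩

lemma cos_nonneg_of_mem_coxeterAngles {ω : ℝ} (hω : ω ∈ coxeterAngles) : 0 ≤ cos ω := by
  obtain rfl | hω := eq_pi_div_two_or_mem_Icc_of_mem_coxeterAngles hω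
  · rw [cos_pi_div_two]
  · exact cos_nonneg_of_mem_Icc ⟨by linarith [hω.1, pi_pos], by linarith [hω.2, pi_pos]⟩

lemma one_half_le_cos_of_mem_Icc {ω : ℝ} (hω : ω ∈ Icc 0 (π / 3)) : 1 / 2 ≤ cos ω := by
  rw [← cos_pi_div_three]
  exact cos_le_cos_of_nonneg_of_le_pi hω.1 (by linarith [pi_pos]) hω.2

lemma meetsInner_of_norm_le {R r : ℝ} {z₀ : ℂ} (hR : 0 ≤ R) (hr : 0 ≤ r)
    (h : ‖z₀‖ ≤ R + r) : MeetsInner R z₀ r := by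
  refine ⟨min R ‖z₀‖ * Complex.exp (arg z₀ * I), ?_, ?_⟩
  · rw [mem_closedBall, dist_eq_norm, norm_ofReal_mul_exp_arg_sub, abs_le]
    constructor <;> cases min_cases R ‖z₀‖ <;> linarith
  · rw [mem_closedBall_zero_iff, norm_mul, Complex.norm_exp_ofReal_mul_I, mul_one,
      Complex.norm_real, Real.norm_of_nonneg (le_min hR (norm_nonneg _))]
    exact min_le_left _ _

lemma meetsOuter_of_le_norm_add {R r : ℝ} {z₀ : ℂ} (hr : 0 ≤ r) (h : R + 1 ≤ ‖z₀‖ + r) :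
    MeetsOuter R z₀ r := by
  refine ⟨((‖z₀‖ + r : ℝ) : ℂ) * Complex.exp (arg z₀ * I), ?_, ?_⟩
  · rw [mem_closedBall, dist_eq_norm, norm_ofReal_mul_exp_arg_sub, add_sub_cancel_left,
      abs_of_nonneg hr]
  · rw [mem_compl_iff, mem_ball_zero_iff, norm_mul, Complex.norm_exp_ofReal_mul_I, mul_one,
      Complex.norm_real, Real.norm_of_nonneg (by positivity)]
    exact h.not_gt

lemma IsAdmissibleDisk.bounds {R r : ℝ} {z₀ : ℂ} (hR : 1 ≤ R) (h : IsAdmissibleDisk R z₀ r) :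
    0 < r ∧ r ≤ 3 ∧ R ^ 2 + r ^ 2 ≤ ‖z₀‖ ^ 2 ∧ ‖z₀‖ ^ 2 ≤ (R + 1) ^ 2 + r ^ 2 := by
  obtain ⟨hr, -, ω₁, hω₁, ω₂, hω₂, hI, hO, hIO⟩ := h
  have hcos₁ := cos_nonneg_of_mem_coxeterAngles hω₁
  have hcos₂ := cos_nonneg_of_mem_coxeterAngles hω₂
  have hd := norm_nonneg z₀
  have hinner : ¬ MeetsInner R z₀ r → R + r < ‖z₀‖ := fun hIn ↦
    lt_of_not_ge (mt (meetsInner_of_norm_le (by linarith) hr.le) hIn)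
  have houter : ¬ MeetsOuter R z₀ r → ‖z₀‖ + r < R + 1 := fun hOut ↦
    lt_of_not_ge (mt (meetsOuter_of_le_norm_add hr.le) hOut)
  have lower : R ^ 2 + r ^ 2 ≤ ‖z₀‖ ^ 2 := by
    by_cases hIn : MeetsInner R z₀ r
    · rw [hI hIn]; nlinarith [mul_nonneg (mul_nonneg hr.le (by linarith : 0 ≤ R)) hcos₁]
    · nlinarith [hinner hIn]
  have upper : ‖z₀‖ ^ 2 ≤ (R + 1) ^ 2 + r ^ 2 := by
    by_cases hOut : MeetsOuter R z₀ r
    · rw [hO hOut]; nlinarith [mul_nonneg (mul_nonneg hr.le (by linarith : 0 ≤ R + 1)) hcos₂]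
    · nlinarith [houter hOut]
  have key : R * r ≤ 2 * R + 1 := by
    by_cases hIn : MeetsInner R z₀ r
    swap
    · nlinarith [hinner hIn]
    by_cases hOut : MeetsOuter R z₀ r
    swap
    · nlinarith [houter hOut]
    have hsum := hIO hIn hOut
    rcases eq_pi_div_two_or_mem_Icc_of_mem_coxeterAngles hω₁ with rfl | h₁
    · rcases eq_pi_div_two_or_mem_Icc_of_mem_coxeterAngles hω₂ with rfl | h₂
      · linarith
      · have := one_half_le_cos_of_mem_Icc h₂
        nlinarith [hO hOut]
    · have := one_half_le_cos_of_mem_Icc h₁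
      nlinarith [hI hIn]
  exact ⟨hr, by nlinarith, lower, upper⟩

lemma complex_volume_real_ball (z : ℂ) {s : ℝ} (hs : 0 ≤ s) :
    volume.real (ball z s) = π * s ^ 2 := by
  rw [measureReal_def, Complex.volume_ball, ENNReal.toReal_mul, ENNReal.toReal_pow,
    ENNReal.toReal_ofReal hs, ENNReal.coe_toReal, NNReal.coe_real_pi, mul_comm]

def projAngles (R θ₁ θ₂ : ℝ) (E : Set ℂ) : Set ℝ :=
  {θ | θ₁ < θ ∧ θ < θ₂ ∧ (E ∩ radialSeg R θ).Nonempty}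

lemma projLen_eq (R θ₁ θ₂ : ℝ) (E : Set ℂ) :
    projLen R θ₁ θ₂ E = R * volume.real (projAngles R θ₁ θ₂ E) := rfl

lemma exists_abs_sub_le_of_mem_projAngles {z₀ : ℂ} {R r δ θ θ₁ θ₂ : ℝ} {E : Set ℂ}
    (hR : 0 < R) (hz₀ : z₀ ≠ 0) (hδ : ‖z₀‖ * sin δ = r) (hδ₀ : 0 ≤ δ) (hδπ : δ ≤ π)
    (hE : E ⊆ closedBall z₀ r) (hθ : θ ∈ projAngles R θ₁ θ₂ E) :
    θ₁ < θ ∧ θ < θ₂ ∧ ∃ k : ℤ, |θ - (arg z₀ + k * (2 * π))| ≤ δ := by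
  obtain ⟨h₁, h₂, _, hzE, ρ, hρ, -, rfl⟩ := hθ
  have := cos_le_cos_sub_arg_of_mem_closedBall hz₀ (by linarith) hδ (hE hzE)
  obtain ⟨k, hk⟩ := exists_int_abs_sub_le_of_cos_le_cos hδ₀ hδπ this
  exact ⟨h₁, h₂, k, by rwa [← sub_sub]⟩

lemma sq_mul_le_volume_real_of_window {z₀ : ℂ} {R r δ θ₁ θ₂ c a b : ℝ} (k : ℤ)
    (hc : c = arg z₀ + k * (2 * π)) (hR : 1 ≤ R) (hr : 0 ≤ r) (hδ : ‖z₀‖ * sin δ = r)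
    (hδπ : δ ≤ π / 2) (h₁ : R ^ 2 + r ^ 2 ≤ ‖z₀‖ ^ 2) (h₂ : ‖z₀‖ ^ 2 ≤ (R + 1) ^ 2 + r ^ 2)
    (hθ₁ : θ₁ ≤ a) (hθ₂ : b ≤ θ₂) (hca : c - δ ≤ a) (hbc : b ≤ c + δ) (hab : a < b)
    (hRab : R * (b - a) ≤ 3 * π) :
    (R * (b - a)) ^ 2 ≤ 144 * π * volume.real (closedBall z₀ r ∩ circRect R θ₁ θ₂) := by
  set L := b - a with hL
  set ψ := L / 4 with hψ
  set t := R * L / π with ht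
  have hpi := pi_pos
  have ht₀ : 0 ≤ t := by positivity
  have ht₃ : t ≤ 3 := by rw [ht, div_le_iff₀ hpi]; linarith
  obtain ⟨ρ₁, ρ₂, hρ₁, hρ₂, hgap, hsub⟩ := exists_polarRect_subset_closedBall (ψ := ψ) k hc hR hr
    hδ (by positivity) (by linarith) hδπ h₁ h₂
  set a' := max a (c - (δ - ψ))
  set b' := min b (c + (δ - ψ))
  have hw : L / 2 ≤ b' - a' := by
    have : b - ψ ≤ b' := le_min (by linarith) (by linarith)
    have : a' ≤ a + ψ := max_le (by linarith) (by linarith)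
    linarith
  have hsinψ : t / 2 ≤ ‖z₀‖ * sin ψ :=
    calc t / 2 = R * (2 / π * ψ) := by simp only [ht, ψ]; field_simp; ring
      _ ≤ ‖z₀‖ * sin ψ := by
        gcongr
        · nlinarith [norm_nonneg z₀]
        · exact mul_le_sin (by positivity) (by linarith)
  have hgap' : t / 6 ≤ ρ₂ - ρ₁ := by
    have : t / 3 ≤ min (‖z₀‖ * sin ψ) 1 := le_min (by linarith) (by linarith)
    linarith
  set s := t / 12 with hs
  set zc : ℂ := ((ρ₁ + ρ₂) / 2 : ℝ) * Complex.exp (((a' + b') / 2 : ℝ) * I)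
  have hball : ball zc s ⊆ polarRect ρ₁ ρ₂ a' b' := by
    refine ball_subset_polarRect (by linarith) (by linarith) ?_
    have : π * s = R * L / 12 := by simp only [s, ht]; field_simp
    rw [this]
    nlinarith
  have hE : polarRect ρ₁ ρ₂ a' b' ⊆ closedBall z₀ r ∩ circRect R θ₁ θ₂ := by
    rw [circRect_eq_polarRect]
    exact subset_inter
      ((polarRect_subset_polarRect le_rfl le_rfl (le_max_right _ _) (min_le_right _ _)).trans hsub)
      (polarRect_subset_polarRect hρ₁ hρ₂ (hθ₁.trans (le_max_left _ _))
        ((min_le_left _ _).trans hθ₂))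
  have hfin : volume (closedBall z₀ r ∩ circRect R θ₁ θ₂) ≠ ⊤ :=
    ((measure_mono inter_subset_left).trans_lt measure_closedBall_lt_top).ne
  calc (R * L) ^ 2 = 144 * π * (π * s ^ 2) := by simp only [s, ht]; field_simp; ring
    _ = 144 * π * volume.real (ball zc s) := by rw [complex_volume_real_ball _ (by positivity)]
    _ ≤ 144 * π * volume.real (closedBall z₀ r ∩ circRect R θ₁ θ₂) :=
      mul_le_mul_of_nonneg_left (measureReal_mono (hball.trans hE) hfin) (by positivity)

theorem projLen_sq_le_volume_real {z₀ : ℂ} {R r θ₁ θ₂ : ℝ} (hR : 1 ≤ R)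
    (hθ : θ₂ - θ₁ ≤ 2 * π) (hr₀ : 0 < r) (hr : r ≤ 3) (h₁ : R ^ 2 + r ^ 2 ≤ ‖z₀‖ ^ 2)
    (h₂ : ‖z₀‖ ^ 2 ≤ (R + 1) ^ 2 + r ^ 2) :
    projLen R θ₁ θ₂ (closedBall z₀ r ∩ circRect R θ₁ θ₂) ^ 2 ≤
      576 * π * volume.real (closedBall z₀ r ∩ circRect R θ₁ θ₂) := by
  set E := closedBall z₀ r ∩ circRect R θ₁ θ₂
  have hpi := pi_pos
  have hRd : R ≤ ‖z₀‖ := by nlinarith [norm_nonneg z₀]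
  have hz₀ : z₀ ≠ 0 := norm_pos_iff.1 (by linarith)
  set δ := arcsin (r / ‖z₀‖)
  have hδ : ‖z₀‖ * sin δ = r := by
    rw [sin_arcsin (by linarith [div_nonneg hr₀.le (norm_nonneg z₀)])
      (by rw [div_le_one (by linarith)]; nlinarith [norm_nonneg z₀])]
    field_simp
  have hδ₀ : 0 ≤ δ := arcsin_nonneg.2 (by positivity)
  have hδπ : δ ≤ π / 2 := arcsin_le_pi_div_two _
  obtain ⟨k, hk⟩ := exists_volume_real_le_two_mul_window (S := projAngles R θ₁ θ₂ E)
    (φ := arg z₀) (by linarith) hθ fun θ hθ ↦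
      exists_abs_sub_le_of_mem_projAngles (by linarith) hz₀ hδ hδ₀ (by linarith)
        inter_subset_left hθ
  set c := arg z₀ + k * (2 * π)
  set a := max θ₁ (c - δ)
  set b := min θ₂ (c + δ)
  rw [Icc_inter_Icc, volume_real_Icc] at hk
  rw [projLen_eq]
  rcases le_or_gt b a with hba | hab
  · rw [max_eq_right (by linarith)] at hk
    rw [le_antisymm (by linarith) measureReal_nonneg, mul_zero, zero_pow two_ne_zero]
    exact mul_nonneg (by positivity) measureReal_nonneg
  rw [max_eq_left (by linarith)] at hk
  have hRab : R * (b - a) ≤ 3 * π :=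
    calc R * (b - a) ≤ ‖z₀‖ * (π * sin δ) := by
          have := mul_le_sin hδ₀ hδπ
          rw [div_mul_eq_mul_div, div_le_iff₀ hpi] at this
          gcongr
          linarith [le_max_right θ₁ (c - δ), min_le_right θ₂ (c + δ)]
      _ ≤ 3 * π := by nlinarith
  have := sq_mul_le_volume_real_of_window k rfl hR hr₀.le hδ hδπ h₁ h₂ (le_max_left _ _)
    (min_le_left _ _) (le_max_right _ _) (min_le_right _ _) hab hRab
  calc (R * volume.real (projAngles R θ₁ θ₂ E)) ^ 2 ≤ (R * (2 * (b - a))) ^ 2 := by gcongr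
    _ ≤ 576 * π * volume.real E := by linarith

end DPG

/-- **Projection–area estimate for admissible disks** (Lemma 4.7).
There are a threshold `R₀ ≫ 1` and a universal constant `A` such that for every
`R ≥ R₀`, every circular rectangle `𝓡` in `𝒜_R` and every admissible disk `D` in `𝒜_R`,
if `l` is the length of the radial projection of `D ∩ 𝓡` onto `∂B(0, R)`, then
`l² ≤ A ⬝ area (D ∩ 𝓡)`. -/
theorem admissible_disk_projection_area_bound :
    ∃ R₀ A : ℝ, 1 ≤ R₀ ∧ 0 < A ∧
      ∀ R : ℝ, R₀ ≤ R → ∀ θ₁ θ₂ : ℝ, θ₁ < θ₂ → θ₂ - θ₁ ≤ 2 * Real.pi →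
      ∀ (z₀ : ℂ) (r : ℝ), IsAdmissibleDisk R z₀ r →
        projLen R θ₁ θ₂ (Metric.closedBall z₀ r ∩ circRect R θ₁ θ₂) ^ 2 ≤
          A * (MeasureTheory.volume (Metric.closedBall z₀ r ∩ circRect R θ₁ θ₂)).toReal := by
  refine ⟨1, 576 * π, le_rfl, by positivity, fun R hR θ₁ θ₂ _ hθ z₀ r hD ↦ ?_⟩
  obtain ⟨hr₀, hr, h₁, h₂⟩ := hD.bounds hR
  exact projLen_sq_le_volume_real hR hθ hr₀ hr h₁ h₂
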